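/- arXiv:1908.04821 — 2 statements merged into one kernel-verified Lean document; each statement's English description precedes it below -/
import Mathlib

section
/- Let x = (a, b, c) : U → ℝ³ be a frontal admitting a tangent moving base Ω of the form Ω = (1 0; 0 1; g₁ g₂) (rows of a 3×2 matrix), with g₁, g₂ : U → ℝ smooth. Then the first and second fundamental form matrices decompose as Dxᵀ·Dx = (a_u b_u; a_v b_v)·(1+g₁² g₁g₂; g₁g₂ 1+g₂²)·(a_u b_u; a_v b_v)ᵀ and −Dxᵀ·Dn = (a_u b_u; a_v b_v)·(g₁u g₁v; g₂u g₂v)·(1+g₁²+g₂²)^{−1/2}. In particular, the symmetry of the second fundamental form gives (a,b)_u·(g₁,g₂)_v = (a,b)_v·(g₁,g₂)_u at every point of U. -/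
open Matrix Filter

noncomputable section

abbrev Pt : Type := ℝ × ℝ
abbrev Vec3 : Type := Fin 3 → ℝ

/-- direction vector for the `j`-th partial derivative -/
def pdir (j : Fin 2) : Pt := if j = 0 then ((1 : ℝ), (0 : ℝ)) else ((0 : ℝ), (1 : ℝ))

/-- partial derivative in coordinate direction `j` -/
def pd {E : Type*} [NormedAddCommGroup E] [NormedSpace ℝ E]
    (j : Fin 2) (f : Pt → E) (p : Pt) : E :=
  fderiv ℝ f p (pdir j)

/-- Jacobian matrix of a map into `Fin n → ℝ` -/
def Jac {n : ℕ} (f : Pt → (Fin n → ℝ)) (p : Pt) : Matrix (Fin n) (Fin 2) ℝ :=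
  Matrix.of fun i j => pd j (fun q => f q i) p

/-- entrywise partial derivative of a matrix valued map -/
def pdM {m n : ℕ} (j : Fin 2) (A : Pt → Matrix (Fin m) (Fin n) ℝ) (p : Pt) :
    Matrix (Fin m) (Fin n) ℝ :=
  Matrix.of fun i k => pd j (fun q => A q i k) p

/-- entrywise smoothness of a matrix valued map on a set -/
def SmoothMatOn {m n : ℕ} (U : Set Pt) (A : Pt → Matrix (Fin m) (Fin n) ℝ) : Prop :=
  ∀ i k, ContDiffOn ℝ (⊤ : ℕ∞) (fun p => A p i k) U

/-- `x` is a frontal on `U` -/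
def IsFrontalOn (U : Set Pt) (x : Pt → Vec3) : Prop :=
  ContDiffOn ℝ (⊤ : ℕ∞) x U ∧
  ∀ p ∈ U, ∃ V : Set Pt, V ⊆ U ∧ IsOpen V ∧ p ∈ V ∧
    ∃ ν : Pt → Vec3, ContDiffOn ℝ (⊤ : ℕ∞) ν V ∧
      ∀ q ∈ V, ν q ⬝ᵥ ν q = 1 ∧ ∀ j : Fin 2, ν q ⬝ᵥ (Jac x q)ᵀ j = 0

/-- `x` is a (wave) front on `U` -/
def IsFrontOn (U : Set Pt) (x : Pt → Vec3) : Prop :=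
  ContDiffOn ℝ (⊤ : ℕ∞) x U ∧
  ∀ p ∈ U, ∃ V : Set Pt, V ⊆ U ∧ IsOpen V ∧ p ∈ V ∧
    ∃ ν : Pt → Vec3, ContDiffOn ℝ (⊤ : ℕ∞) ν V ∧
      ∀ q ∈ V, ν q ⬝ᵥ ν q = 1 ∧ (∀ j : Fin 2, ν q ⬝ᵥ (Jac x q)ᵀ j = 0) ∧
        (Matrix.fromRows (Jac x q) (Jac ν q)).rank = 2

/-- `Ω` is a tangent moving base of `x` on `U` -/
def IsTMBOn (U : Set Pt) (x : Pt → Vec3) (Ω : Pt → Matrix (Fin 3) (Fin 2) ℝ) : Prop :=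
  SmoothMatOn U Ω ∧
  ∀ p ∈ U, LinearIndependent ℝ (fun j : Fin 2 => (Ω p)ᵀ j) ∧
    ∀ j : Fin 2, (Jac x p)ᵀ j ∈ Submodule.span ℝ (Set.range fun k : Fin 2 => (Ω p)ᵀ k)

/-- unit normal induced by a moving base -/
def nor (Ω : Pt → Matrix (Fin 3) (Fin 2) ℝ) (p : Pt) : Vec3 :=
  (Real.sqrt ((crossProduct ((Ω p)ᵀ 0) ((Ω p)ᵀ 1)) ⬝ᵥ (crossProduct ((Ω p)ᵀ 0) ((Ω p)ᵀ 1))))⁻¹ •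
    crossProduct ((Ω p)ᵀ 0) ((Ω p)ᵀ 1)

def IOm (Ω : Pt → Matrix (Fin 3) (Fin 2) ℝ) (p : Pt) : Matrix (Fin 2) (Fin 2) ℝ :=
  (Ω p)ᵀ * Ω p

def IIOm (Ω : Pt → Matrix (Fin 3) (Fin 2) ℝ) (p : Pt) : Matrix (Fin 2) (Fin 2) ℝ :=
  -((Ω p)ᵀ * Jac (nor Ω) p)

def Lam (x : Pt → Vec3) (Ω : Pt → Matrix (Fin 3) (Fin 2) ℝ) (p : Pt) :
    Matrix (Fin 2) (Fin 2) ℝ :=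
  (Jac x p)ᵀ * Ω p * (IOm Ω p)⁻¹

def lamOm (x : Pt → Vec3) (Ω : Pt → Matrix (Fin 3) (Fin 2) ℝ) (p : Pt) : ℝ :=
  (Lam x Ω p).det

def muM (Ω : Pt → Matrix (Fin 3) (Fin 2) ℝ) (p : Pt) : Matrix (Fin 2) (Fin 2) ℝ :=
  -((IIOm Ω p)ᵀ * (IOm Ω p)⁻¹)

/-- the Ω-relative curvature -/
def KOm (Ω : Pt → Matrix (Fin 3) (Fin 2) ℝ) (p : Pt) : ℝ := (muM Ω p).det

/-- the Ω-relative mean curvature -/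
def HOm (x : Pt → Vec3) (Ω : Pt → Matrix (Fin 3) (Fin 2) ℝ) (p : Pt) : ℝ :=
  -(1 / 2) * (muM Ω p * (Lam x Ω p).adjugate).trace

/-- singular set of `x` in `U` -/
def Sing (U : Set Pt) (x : Pt → Vec3) : Set Pt :=
  {p ∈ U | (Jac x p).rank < 2}

/-- first Christoffel matrix built from `E, F, G` -/
def Gam1 (E F G : Pt → ℝ) (p : Pt) : Matrix (Fin 2) (Fin 2) ℝ :=
  !![(1 / 2) * pd 0 E p, pd 0 F p - (1 / 2) * pd 1 E p;
     (1 / 2) * pd 1 E p, (1 / 2) * pd 0 G p] * (!![E p, F p; F p, G p])⁻¹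

/-- second Christoffel matrix built from `E, F, G` -/
def Gam2 (E F G : Pt → ℝ) (p : Pt) : Matrix (Fin 2) (Fin 2) ℝ :=
  !![(1 / 2) * pd 1 E p, (1 / 2) * pd 0 G p;
     pd 1 F p - (1 / 2) * pd 0 G p, (1 / 2) * pd 1 G p] * (!![E p, F p; F p, G p])⁻¹

/-- the unit normal `(-g₁, -g₂, 1)/√(1+g₁²+g₂²)` -/
def gnormal (g₁ g₂ : Pt → ℝ) (q : Pt) : Vec3 :=
  (Real.sqrt (1 + g₁ q ^ 2 + g₂ q ^ 2))⁻¹ • ![-(g₁ q), -(g₂ q), 1]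

/-- Weingarten matrix `α = -IIᵀ I⁻¹` of a frontal -/
def alphaM (x : Pt → Vec3) (Ω : Pt → Matrix (Fin 3) (Fin 2) ℝ) (p : Pt) :
    Matrix (Fin 2) (Fin 2) ℝ :=
  -((-((Jac x p)ᵀ * Jac (nor Ω) p))ᵀ * ((Jac x p)ᵀ * Jac x p)⁻¹)

/-- Gaussian curvature -/
def Kgauss (x : Pt → Vec3) (Ω : Pt → Matrix (Fin 3) (Fin 2) ℝ) (p : Pt) : ℝ :=
  (alphaM x Ω p).det

/-- mean curvature -/
def Hmean (x : Pt → Vec3) (Ω : Pt → Matrix (Fin 3) (Fin 2) ℝ) (p : Pt) : ℝ :=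
  -(1 / 2) * (alphaM x Ω p).trace


lemma pd_congr' {f g : Pt → ℝ} {p : Pt} (h : f =ᶠ[nhds p] g) (j : Fin 2) :
    pd j f p = pd j g p := by unfold pd; rw [h.fderiv_eq]

lemma pd_mul' {f g : Pt → ℝ} {p : Pt} (hf : DifferentiableAt ℝ f p)
    (hg : DifferentiableAt ℝ g p) (j : Fin 2) :
    pd j (fun q => f q * g q) p = pd j f p * g p + f p * pd j g p := by
  simp [pd, fderiv_fun_mul hf hg]; ring

lemma pd_add' {f g : Pt → ℝ} {p : Pt} (hf : DifferentiableAt ℝ f p)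
    (hg : DifferentiableAt ℝ g p) (j : Fin 2) :
    pd j (fun q => f q + g q) p = pd j f p + pd j g p := by
  simp [pd, fderiv_fun_add hf hg]

lemma pd_neg' {f : Pt → ℝ} {p : Pt} (j : Fin 2) :
    pd j (fun q => -f q) p = -pd j f p := by
  simp [pd, fderiv_neg]

lemma pd_differentiableAt' {f : Pt → ℝ} {U : Set Pt} (hU : IsOpen U)
    (hf : ContDiffOn ℝ (⊤ : ℕ∞) f U) {p : Pt} (hp : p ∈ U) (j : Fin 2) :
    DifferentiableAt ℝ (pd j f) p := by
  have h := (hf.contDiffAt (hU.mem_nhds hp)).fderiv_right (m := 1) (WithTop.coe_le_coe.mpr le_top)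
  exact (h.clm_apply contDiffAt_const).differentiableAt one_ne_zero

lemma pd_symm' {f : Pt → ℝ} {U : Set Pt} (hU : IsOpen U)
    (hf : ContDiffOn ℝ (⊤ : ℕ∞) f U) {p : Pt} (hp : p ∈ U) (j k : Fin 2) :
    pd j (pd k f) p = pd k (pd j f) p := by
  have hct := hf.contDiffAt (hU.mem_nhds hp)
  have hsymm := hct.isSymmSndFDerivAt (by rw [minSmoothness_of_isRCLikeNormedField]; exact WithTop.coe_le_coe.mpr le_top)
  have hdiff : DifferentiableAt ℝ (fderiv ℝ f) p :=
    (hct.fderiv_right (m := 1) (WithTop.coe_le_coe.mpr le_top)).differentiableAt one_ne_zero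
  have key : ∀ v w : Pt, fderiv ℝ (fun q => fderiv ℝ f q v) p w
      = fderiv ℝ (fderiv ℝ f) p w v := by
    intro v w
    rw [fderiv_clm_apply hdiff (differentiableAt_const v)]
    simp
  show fderiv ℝ (fun q => fderiv ℝ f q (pdir k)) p (pdir j)
      = fderiv ℝ (fun q => fderiv ℝ f q (pdir j)) p (pdir k)
  rw [key, key, hsymm.eq]


/-- decomposition of the fundamental forms for a tangent moving base of
the special form `(1 0; 0 1; g₁ g₂)`. -/
theorem frontal_special_base_decomposition
    (U : Set Pt) (hU : IsOpen U) (x : Pt → Vec3) (a b c g₁ g₂ : Pt → ℝ)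
    (hx3 : ∀ q : Pt, x q = ![a q, b q, c q])
    (hg1 : ContDiffOn ℝ (⊤ : ℕ∞) g₁ U) (hg2 : ContDiffOn ℝ (⊤ : ℕ∞) g₂ U)
    (hx : IsFrontalOn U x)
    (Ω : Pt → Matrix (Fin 3) (Fin 2) ℝ) (hΩ : IsTMBOn U x Ω)
    (hform : ∀ p ∈ U, Ω p = !![(1 : ℝ), 0; 0, 1; g₁ p, g₂ p]) :
    ∀ p ∈ U,
      (Jac x p)ᵀ * Jac x p =
        !![pd 0 a p, pd 0 b p; pd 1 a p, pd 1 b p] *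
          !![1 + g₁ p ^ 2, g₁ p * g₂ p; g₁ p * g₂ p, 1 + g₂ p ^ 2] *
          (!![pd 0 a p, pd 0 b p; pd 1 a p, pd 1 b p])ᵀ ∧
      -((Jac x p)ᵀ * Jac (nor Ω) p) =
        (Real.sqrt (1 + g₁ p ^ 2 + g₂ p ^ 2))⁻¹ •
          (!![pd 0 a p, pd 0 b p; pd 1 a p, pd 1 b p] *
            !![pd 0 g₁ p, pd 1 g₁ p; pd 0 g₂ p, pd 1 g₂ p]) ∧
      pd 0 a p * pd 1 g₁ p + pd 0 b p * pd 1 g₂ p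
        = pd 1 a p * pd 0 g₁ p + pd 1 b p * pd 0 g₂ p := by
  have hfa : (fun q => x q 0) = a := by funext q; rw [hx3]; simp
  have hfb : (fun q => x q 1) = b := by funext q; rw [hx3]; simp
  have hfc : (fun q => x q 2) = c := by funext q; rw [hx3]; simp
  have hcomp : ∀ i : Fin 3, ContDiffOn ℝ (⊤ : ℕ∞) (fun q => x q i) U := fun i =>
    (ContinuousLinearMap.proj i : (Fin 3 → ℝ) →L[ℝ] ℝ).contDiff.comp_contDiffOn hx.1
  have ha : ContDiffOn ℝ (⊤ : ℕ∞) a U := hfa ▸ hcomp 0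
  have hb : ContDiffOn ℝ (⊤ : ℕ∞) b U := hfb ▸ hcomp 1
  have hc : ContDiffOn ℝ (⊤ : ℕ∞) c U := hfc ▸ hcomp 2
  -- tangency relation
  have hrel : ∀ q ∈ U, ∀ j : Fin 2,
      pd j c q = pd j a q * g₁ q + pd j b q * g₂ q := by
    intro q hq j
    have hsp := (hΩ.2 q hq).2 j
    rw [hform q hq, Submodule.mem_span_range_iff_exists_fun] at hsp
    obtain ⟨co, hco⟩ := hsp
    have h0 := congrFun hco 0
    have h1 := congrFun hco 1
    have h2 := congrFun hco 2
    simp [Fin.sum_univ_two, Jac, hfa, hfb, hfc, Matrix.transpose_apply, Matrix.vecHead, Matrix.vecTail] at h0 h1 h2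
    rw [← h2, ← h0, ← h1]
  intro p hp
  have hnhds := hU.mem_nhds hp
  have dg1 : DifferentiableAt ℝ g₁ p := (hg1.contDiffAt hnhds).differentiableAt (by simp)
  have dg2 : DifferentiableAt ℝ g₂ p := (hg2.contDiffAt hnhds).differentiableAt (by simp)
  have hcp : ∀ j : Fin 2, pd j c p = pd j a p * g₁ p + pd j b p * g₂ p :=
    fun j => hrel p hp j
  -- normal vector
  set s : Pt → ℝ := fun q => (Real.sqrt (1 + g₁ q ^ 2 + g₂ q ^ 2))⁻¹ with hs
  have hcross : ∀ q ∈ U, crossProduct ((Ω q)ᵀ 0) ((Ω q)ᵀ 1)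
      = ![-(g₁ q), -(g₂ q), 1] := by
    intro q hq; rw [hform q hq]
    ext i; fin_cases i <;> simp [cross_apply, Matrix.transpose_apply, Matrix.vecHead, Matrix.vecTail]
  have hnor : ∀ q ∈ U, nor Ω q = fun i => s q * (![-(g₁ q), -(g₂ q), (1:ℝ)]) i := by
    intro q hq
    have hd : (![-(g₁ q), -(g₂ q), (1:ℝ)] ⬝ᵥ ![-(g₁ q), -(g₂ q), (1:ℝ)])
        = 1 + g₁ q ^ 2 + g₂ q ^ 2 := by
      simp [dotProduct, Fin.sum_univ_three]; ring
    funext i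
    simp only [nor, hcross q hq, hd, Pi.smul_apply, smul_eq_mul, hs]
  have hev0 : (fun q => nor Ω q 0) =ᶠ[nhds p] (fun q => s q * -(g₁ q)) := by
    filter_upwards [hnhds] with q hq; rw [hnor q hq]; simp
  have hev1 : (fun q => nor Ω q 1) =ᶠ[nhds p] (fun q => s q * -(g₂ q)) := by
    filter_upwards [hnhds] with q hq; rw [hnor q hq]; simp
  have hev2 : (fun q => nor Ω q 2) =ᶠ[nhds p] s := by
    filter_upwards [hnhds] with q hq; rw [hnor q hq]; simp
  have hpos : (0:ℝ) < 1 + g₁ p ^ 2 + g₂ p ^ 2 := by positivity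
  have hds : DifferentiableAt ℝ s p := by
    apply DifferentiableAt.inv
    · exact DifferentiableAt.sqrt
        (((differentiableAt_const (1:ℝ)).add (dg1.pow 2)).add (dg2.pow 2)) (ne_of_gt hpos)
    · exact Real.sqrt_ne_zero'.mpr hpos
  have hn0 : ∀ k : Fin 2, pd k (fun q => nor Ω q 0) p
      = pd k s p * -(g₁ p) + s p * -(pd k g₁ p) := by
    intro k
    rw [pd_congr' hev0 k, pd_mul' (g := fun q => -g₁ q) hds dg1.neg k, pd_neg']
  have hn1 : ∀ k : Fin 2, pd k (fun q => nor Ω q 1) p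
      = pd k s p * -(g₂ p) + s p * -(pd k g₂ p) := by
    intro k
    rw [pd_congr' hev1 k, pd_mul' (g := fun q => -g₂ q) hds dg2.neg k, pd_neg']
  have hn2 : ∀ k : Fin 2, pd k (fun q => nor Ω q 2) p = pd k s p :=
    fun k => pd_congr' hev2 k
  refine ⟨?_, ?_, ?_⟩
  · ext i j
    fin_cases i <;> fin_cases j <;>
      · simp [Matrix.mul_apply, Fin.sum_univ_three, Fin.sum_univ_two, Jac,
          hfa, hfb, hfc, Matrix.transpose_apply, Matrix.vecHead, Matrix.vecTail]
        simp only [hcp]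
        ring
  · ext i j
    fin_cases i <;> fin_cases j <;>
      · simp [Matrix.mul_apply, Fin.sum_univ_three, Fin.sum_univ_two, Jac,
          hfa, hfb, hfc, Matrix.transpose_apply, Matrix.vecHead, Matrix.vecTail, Matrix.smul_apply, smul_eq_mul, Matrix.neg_apply]
        simp only [hn0, hn1, hn2, hcp]
        ring
  · have h2nd : ∀ j k : Fin 2, pd k (pd j c) p
        = (pd k (pd j a) p * g₁ p + pd j a p * pd k g₁ p)
          + (pd k (pd j b) p * g₂ p + pd j b p * pd k g₂ p) := by
      intro j k
      have hev : pd j c =ᶠ[nhds p] fun q => pd j a q * g₁ q + pd j b q * g₂ q := by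
        filter_upwards [hnhds] with q hq; exact hrel q hq j
      rw [pd_congr' hev k,
        pd_add' (f := fun q => pd j a q * g₁ q) (g := fun q => pd j b q * g₂ q) ((pd_differentiableAt' hU ha hp j).mul dg1)
          ((pd_differentiableAt' hU hb hp j).mul dg2) k,
        pd_mul' (pd_differentiableAt' hU ha hp j) dg1 k,
        pd_mul' (pd_differentiableAt' hU hb hp j) dg2 k]
    have e1 := h2nd 0 1
    have e2 := h2nd 1 0
    rw [pd_symm' hU ha hp 1 0, pd_symm' hU hb hp 1 0, pd_symm' hU hc hp 1 0] at e1
    linarith [e1, e2]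
end
end

section
/- Let x : U → ℝ³ be a smooth map on an open set U ⊆ ℝ². Then x is a frontal if and only if for every p ∈ U there exist an open neighborhood V_p ⊆ U of p and smooth maps Ω : V_p → M_{3×2}(ℝ) and Λ : V_p → M_{2×2}(ℝ) with rank Ω(q) = 2 for all q ∈ V_p such that Dx(q) = Ω(q)·Λ(q)ᵀ for all q ∈ V_p. -/
open Matrix Filter

noncomputable section

section Aux

lemma fin3_cases (i : Fin 3) : i = 0 ∨ i = 1 ∨ i = 2 := by fin_cases i <;> simp

/-- projection of the `m`-th standard basis vector onto the orthogonal complement of `ν` -/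
def wvec (ν : Vec3) (m : Fin 3) : Vec3 := fun a => (if a = m then (1:ℝ) else 0) - ν m * ν a

lemma scalar_decomp (vi vj vk ci cj ck : ℝ) (hunit : vi^2 + vj^2 + vk^2 = 1)
    (hi : vi ≠ 0) (horth : vi*ci + vj*cj + vk*ck = 0) :
    (cj = (((1-vk^2)*cj + vj*vk*ck)/vi^2) * (1 - vj*vj) + ((vj*vk*cj + (1-vj^2)*ck)/vi^2) * (0 - vk*vj)) ∧
    (ck = (((1-vk^2)*cj + vj*vk*ck)/vi^2) * (0 - vj*vk) + ((vj*vk*cj + (1-vj^2)*ck)/vi^2) * (1 - vk*vk)) ∧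
    (ci = (((1-vk^2)*cj + vj*vk*ck)/vi^2) * (0 - vj*vi) + ((vj*vk*cj + (1-vj^2)*ck)/vi^2) * (0 - vk*vi)) := by
  refine ⟨?_, ?_, ?_⟩ <;> field_simp
  · linear_combination cj * hunit
  · linear_combination ck * hunit
  · linear_combination vi * horth

lemma key_decomp (ν c : Vec3) (i : Fin 3) (hunit : ν ⬝ᵥ ν = 1) (hi : ν i ≠ 0)
    (horth : ν ⬝ᵥ c = 0) (a : Fin 3) :
    c a = (((1 - ν (i+2)^2) * c (i+1) + ν (i+1) * ν (i+2) * c (i+2)) / ν i ^ 2) * wvec ν (i+1) a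
        + ((ν (i+1) * ν (i+2) * c (i+1) + (1 - ν (i+1)^2) * c (i+2)) / ν i ^ 2) * wvec ν (i+2) a := by
  simp only [dotProduct, Fin.sum_univ_three] at hunit horth
  rcases fin3_cases i with rfl | rfl | rfl <;> rcases fin3_cases a with rfl | rfl | rfl <;>
    simp only [wvec, show (0:Fin 3)+1 = 1 from rfl, show (0:Fin 3)+2 = 2 from rfl,
      show (1:Fin 3)+1 = 2 from rfl, show (1:Fin 3)+2 = 0 from rfl,
      show (2:Fin 3)+1 = 0 from rfl, show (2:Fin 3)+2 = 1 from rfl, Fin.reduceEq,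
      if_true, if_false, ite_true, ite_false]
  · linear_combination (scalar_decomp (ν 0) (ν 1) (ν 2) (c 0) (c 1) (c 2) (by linear_combination hunit) hi (by linear_combination horth)).2.2
  · linear_combination (scalar_decomp (ν 0) (ν 1) (ν 2) (c 0) (c 1) (c 2) (by linear_combination hunit) hi (by linear_combination horth)).1
  · linear_combination (scalar_decomp (ν 0) (ν 1) (ν 2) (c 0) (c 1) (c 2) (by linear_combination hunit) hi (by linear_combination horth)).2.1
  · linear_combination (scalar_decomp (ν 1) (ν 2) (ν 0) (c 1) (c 2) (c 0) (by linear_combination hunit) hi (by linear_combination horth)).2.1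
  · linear_combination (scalar_decomp (ν 1) (ν 2) (ν 0) (c 1) (c 2) (c 0) (by linear_combination hunit) hi (by linear_combination horth)).2.2
  · linear_combination (scalar_decomp (ν 1) (ν 2) (ν 0) (c 1) (c 2) (c 0) (by linear_combination hunit) hi (by linear_combination horth)).1
  · linear_combination (scalar_decomp (ν 2) (ν 0) (ν 1) (c 2) (c 0) (c 1) (by linear_combination hunit) hi (by linear_combination horth)).1
  · linear_combination (scalar_decomp (ν 2) (ν 0) (ν 1) (c 2) (c 0) (c 1) (by linear_combination hunit) hi (by linear_combination horth)).2.1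
  · linear_combination (scalar_decomp (ν 2) (ν 0) (ν 1) (c 2) (c 0) (c 1) (by linear_combination hunit) hi (by linear_combination horth)).2.2

lemma scalar_li (vi vj vk s t : ℝ) (hi : vi ≠ 0)
    (ej : s*(1 - vj*vj) + t*(0 - vk*vj) = 0)
    (ek : s*(0 - vj*vk) + t*(1 - vk*vk) = 0)
    (ei : s*(0 - vj*vi) + t*(0 - vk*vi) = 0) : s = 0 ∧ t = 0 := by
  have h5 : s*vj + t*vk = 0 := by
    have h4 : vi * (s*vj + t*vk) = vi * 0 := by linear_combination -ei
    exact mul_left_cancel₀ hi h4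
  exact ⟨by linear_combination ej + vj*h5, by linear_combination ek + vk*h5⟩

lemma wvec_li (ν : Vec3) (i : Fin 3) (hi : ν i ≠ 0) :
    LinearIndependent ℝ ![wvec ν (i+1), wvec ν (i+2)] := by
  rw [LinearIndependent.pair_iff]
  intro s t hst
  have h0 := congrFun hst 0
  have h1 := congrFun hst 1
  have h2 := congrFun hst 2
  rcases fin3_cases i with rfl | rfl | rfl <;>
    simp only [wvec, Pi.add_apply, Pi.smul_apply, smul_eq_mul, Pi.zero_apply,
      show (0:Fin 3)+1 = 1 from rfl, show (0:Fin 3)+2 = 2 from rfl,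
      show (1:Fin 3)+1 = 2 from rfl, show (1:Fin 3)+2 = 0 from rfl,
      show (2:Fin 3)+1 = 0 from rfl, show (2:Fin 3)+2 = 1 from rfl, Fin.reduceEq,
      if_true, if_false, ite_true, ite_false] at h0 h1 h2
  · exact scalar_li (ν 0) (ν 1) (ν 2) s t hi (by linear_combination h1)
      (by linear_combination h2) (by linear_combination h0)
  · exact scalar_li (ν 1) (ν 2) (ν 0) s t hi (by linear_combination h2)
      (by linear_combination h0) (by linear_combination h1)
  · exact scalar_li (ν 2) (ν 0) (ν 1) s t hi (by linear_combination h0)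
      (by linear_combination h1) (by linear_combination h2)

lemma rank_two_iff (A : Matrix (Fin 3) (Fin 2) ℝ) :
    A.rank = 2 ↔ LinearIndependent ℝ (fun j : Fin 2 => Aᵀ j) := by
  rw [Matrix.rank_eq_finrank_span_cols, linearIndependent_iff_card_eq_finrank_span,
    Fintype.card_fin, Set.finrank]
  exact eq_comm

lemma pair_eq (f : Fin 2 → Vec3) : (fun j => f j) = ![f 0, f 1] := by
  funext j; fin_cases j <;> rfl

lemma cross_ne_zero (u v : Vec3) (hli : LinearIndependent ℝ ![u, v]) :
    crossProduct u v ≠ 0 := by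
  intro hzero
  rw [LinearIndependent.pair_iff] at hli
  have h0 := congrFun hzero 0
  have h1 := congrFun hzero 1
  have h2 := congrFun hzero 2
  simp only [cross_apply, Matrix.cons_val_zero, Matrix.cons_val_one, Matrix.head_cons,
    Pi.zero_apply, Matrix.cons_val_two, Matrix.tail_cons] at h0 h1 h2
  by_cases hu : ∀ m, u m = 0
  · have := hli 1 0 (by funext a; simp [hu a])
    exact one_ne_zero this.1
  · push_neg at hu
    obtain ⟨m, hm⟩ := hu
    have key : ∀ a, v m * u a - u m * v a = 0 := by
      intro a
      rcases fin3_cases m with rfl | rfl | rfl <;> rcases fin3_cases a with rfl | rfl | rfl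
      · ring
      · linear_combination -h2
      · linear_combination h1
      · linear_combination h2
      · ring
      · linear_combination -h0
      · linear_combination -h1
      · linear_combination h0
      · ring
    have hcon := (hli (v m) (-(u m)) (by
      funext a
      simp only [Pi.add_apply, Pi.smul_apply, smul_eq_mul, Pi.zero_apply, neg_mul]
      linear_combination key a)).2
    exact hm (neg_eq_zero.mp hcon)

lemma contDiffOn_pd {V : Set Pt} (hV : IsOpen V) {f : Pt → ℝ} (hf : ContDiffOn ℝ (⊤ : ℕ∞) f V)
    (j : Fin 2) : ContDiffOn ℝ (⊤ : ℕ∞) (fun q => pd j f q) V :=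
  (hf.fderiv_of_isOpen hV (by simp)).clm_apply contDiffOn_const

lemma contDiffOn_jac {V : Set Pt} (hV : IsOpen V) {f : Pt → Vec3} (hf : ContDiffOn ℝ (⊤ : ℕ∞) f V)
    (a : Fin 3) (j : Fin 2) : ContDiffOn ℝ (⊤ : ℕ∞) (fun q => Jac f q a j) V := by
  have := contDiffOn_pd hV ((contDiffOn_pi.mp hf) a) j
  simpa [Jac] using this

lemma dotProduct_self_pos {v : Vec3} (hv : v ≠ 0) : 0 < v ⬝ᵥ v := by
  have h1 : 0 ≤ v ⬝ᵥ v := Finset.sum_nonneg (fun i _ => mul_self_nonneg _)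
  have h2 : v ⬝ᵥ v ≠ 0 := fun h0 => hv (dotProduct_self_eq_zero.mp h0)
  exact lt_of_le_of_ne h1 (Ne.symm h2)

lemma unit_normalize (v : Vec3) (hv : v ≠ 0) :
    ((Real.sqrt (v ⬝ᵥ v))⁻¹ • v) ⬝ᵥ ((Real.sqrt (v ⬝ᵥ v))⁻¹ • v) = 1 := by
  have hpos := dotProduct_self_pos hv
  have hsq : Real.sqrt (v ⬝ᵥ v) ≠ 0 := Real.sqrt_ne_zero'.mpr hpos
  rw [smul_dotProduct, dotProduct_smul, smul_eq_mul, smul_eq_mul, ← Real.mul_self_sqrt hpos.le]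
  have h2 : Real.sqrt (v 0 * v 0 + v 1 * v 1 + v 2 * v 2) ≠ 0 := by
    simpa [dotProduct, Fin.sum_univ_three] using hsq
  field_simp
  rw [Real.sqrt_sq (Real.sqrt_nonneg _)]

end Aux

/-- a smooth map is a frontal iff its Jacobian locally factors as `Ω Λᵀ`
with `Ω` of rank 2. -/
theorem frontal_iff_jacobian_decomposition
    (U : Set Pt) (hU : IsOpen U) (x : Pt → Vec3) (hx : ContDiffOn ℝ (⊤ : ℕ∞) x U) :
    IsFrontalOn U x ↔
      ∀ p ∈ U, ∃ V : Set Pt, V ⊆ U ∧ IsOpen V ∧ p ∈ V ∧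
        ∃ Ω : Pt → Matrix (Fin 3) (Fin 2) ℝ, ∃ Λ : Pt → Matrix (Fin 2) (Fin 2) ℝ,
          SmoothMatOn V Ω ∧ SmoothMatOn V Λ ∧
          (∀ q ∈ V, (Ω q).rank = 2) ∧
          (∀ q ∈ V, Jac x q = Ω q * (Λ q)ᵀ) := by
  constructor
  · rintro ⟨hx', hloc⟩ p hp
    obtain ⟨V, hVU, hVopen, hpV, ν, hν, hνprop⟩ := hloc p hp
    obtain ⟨i, hi⟩ : ∃ i, ν p i ≠ 0 := by
      by_contra hcon
      push_neg at hcon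
      have h1 := (hνprop p hpV).1
      simp [dotProduct, Fin.sum_univ_three, hcon] at h1
    set W : Set Pt := V ∩ (fun q => ν q i) ⁻¹' {0}ᶜ with hWdef
    have hWopen : IsOpen W :=
      ContinuousOn.isOpen_inter_preimage ((contDiffOn_pi.mp hν i).continuousOn) hVopen
        isOpen_compl_singleton
    have hWV : W ⊆ V := Set.inter_subset_left
    have hpW : p ∈ W := ⟨hpV, hi⟩
    have hνc : ∀ a, ContDiffOn ℝ (⊤ : ℕ∞) (fun q => ν q a) W :=
      fun a => ((contDiffOn_pi.mp hν) a).mono hWV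
    have hne : ∀ q ∈ W, ν q i ≠ 0 := fun q hq => hq.2
    refine ⟨W, hWV.trans hVU, hWopen, hpW,
      (fun q => Matrix.of fun a b => wvec (ν q) (if b = 0 then i+1 else i+2) a),
      (fun q => Matrix.of fun j' b =>
        if b = 0 then
          ((1 - ν q (i+2)^2) * Jac x q (i+1) j' + ν q (i+1) * ν q (i+2) * Jac x q (i+2) j')
            / ν q i ^ 2
        else
          (ν q (i+1) * ν q (i+2) * Jac x q (i+1) j' + (1 - ν q (i+1)^2) * Jac x q (i+2) j')
            / ν q i ^ 2),
      ?_, ?_, ?_, ?_⟩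
    · intro a b
      simp only [Matrix.of_apply, wvec]
      exact contDiffOn_const.sub ((hνc _).mul (hνc a))
    · intro j' b
      have hJ : ∀ m : Fin 3, ContDiffOn ℝ (⊤ : ℕ∞) (fun q => Jac x q m j') W :=
        fun m => contDiffOn_jac hWopen (hx.mono (hWV.trans hVU)) m j'
      have hdenom : ∀ q ∈ W, ν q i ^ 2 ≠ 0 := fun q hq => pow_ne_zero 2 (hne q hq)
      by_cases hb : b = 0 <;> simp only [Matrix.of_apply, hb, if_true, if_false, ite_true, ite_false]
      · exact ContDiffOn.div
          (((contDiffOn_const.sub ((hνc _).pow 2)).mul (hJ _)).add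
            (((hνc _).mul (hνc _)).mul (hJ _))) ((hνc i).pow 2) hdenom
      · exact ContDiffOn.div
          ((((hνc _).mul (hνc _)).mul (hJ _)).add
            ((contDiffOn_const.sub ((hνc _).pow 2)).mul (hJ _))) ((hνc i).pow 2) hdenom
    · intro q hq
      rw [rank_two_iff]
      have hli := wvec_li (ν q) i (hne q hq)
      have hfe : (fun j : Fin 2 =>
          (Matrix.of fun a b => wvec (ν q) (if b = 0 then i+1 else i+2) a)ᵀ j)
          = ![wvec (ν q) (i+1), wvec (ν q) (i+2)] := by
        funext b a
        fin_cases b <;> rfl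
      rw [hfe]
      exact hli
    · intro q hq
      have horth := (hνprop q (hWV hq)).2
      have hunit := (hνprop q (hWV hq)).1
      ext a j'
      rw [Matrix.mul_apply, Fin.sum_univ_two]
      simp only [Matrix.transpose_apply, Matrix.of_apply, Fin.reduceEq, if_true, if_false,
        ite_true, ite_false]
      have hkey := key_decomp (ν q) (fun m => Jac x q m j') i hunit (hne q hq) (horth j') a
      linear_combination hkey
  · intro hdec
    refine ⟨hx, fun p hp => ?_⟩
    obtain ⟨V, hVU, hVopen, hpV, Ω, Λ, hΩs, hΛs, hrank, heq⟩ := hdec p hp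
    have hli : ∀ q ∈ V, LinearIndependent ℝ ![(Ω q)ᵀ 0, (Ω q)ᵀ 1] := by
      intro q hq
      have h1 := (rank_two_iff (Ω q)).mp (hrank q hq)
      have h2 : (fun j => (Ω q)ᵀ j) = ![(Ω q)ᵀ 0, (Ω q)ᵀ 1] := pair_eq _
      rwa [h2] at h1
    have hcne : ∀ q ∈ V, crossProduct ((Ω q)ᵀ 0) ((Ω q)ᵀ 1) ≠ 0 :=
      fun q hq => cross_ne_zero _ _ (hli q hq)
    have hspos : ∀ q ∈ V,
        0 < crossProduct ((Ω q)ᵀ 0) ((Ω q)ᵀ 1) ⬝ᵥ crossProduct ((Ω q)ᵀ 0) ((Ω q)ᵀ 1) :=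
      fun q hq => dotProduct_self_pos (hcne q hq)
    refine ⟨V, hVU, hVopen, hpV,
      fun q => (Real.sqrt (crossProduct ((Ω q)ᵀ 0) ((Ω q)ᵀ 1) ⬝ᵥ
        crossProduct ((Ω q)ᵀ 0) ((Ω q)ᵀ 1)))⁻¹ • crossProduct ((Ω q)ᵀ 0) ((Ω q)ᵀ 1),
      ?_, ?_⟩
    · have hc : ∀ a : Fin 3, ContDiffOn ℝ (⊤ : ℕ∞)
          (fun q => crossProduct ((Ω q)ᵀ 0) ((Ω q)ᵀ 1) a) V := by
        intro a
        rcases fin3_cases a with rfl | rfl | rfl <;>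
          simp only [cross_apply, Matrix.cons_val_zero, Matrix.cons_val_one, Matrix.head_cons,
            Matrix.cons_val_two, Matrix.tail_cons, Matrix.transpose_apply] <;>
          exact ((hΩs _ _).mul (hΩs _ _)).sub ((hΩs _ _).mul (hΩs _ _))
      have hs : ContDiffOn ℝ (⊤ : ℕ∞)
          (fun q => crossProduct ((Ω q)ᵀ 0) ((Ω q)ᵀ 1) ⬝ᵥ crossProduct ((Ω q)ᵀ 0) ((Ω q)ᵀ 1)) V := by
        simp only [dotProduct, Fin.sum_univ_three]
        exact (((hc 0).mul (hc 0)).add ((hc 1).mul (hc 1))).add ((hc 2).mul (hc 2))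
      have hsqrt := hs.sqrt (fun q hq => ne_of_gt (hspos q hq))
      have hinv := hsqrt.inv (fun q hq => Real.sqrt_ne_zero'.mpr (hspos q hq))
      rw [contDiffOn_pi]
      intro a
      simp only [Pi.smul_apply, smul_eq_mul]
      exact hinv.mul (hc a)
    · intro q hq
      have hsq : Real.sqrt (crossProduct ((Ω q)ᵀ 0) ((Ω q)ᵀ 1) ⬝ᵥ
          crossProduct ((Ω q)ᵀ 0) ((Ω q)ᵀ 1)) ≠ 0 := Real.sqrt_ne_zero'.mpr (hspos q hq)
      constructor
      · exact unit_normalize _ (hcne q hq)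
      · intro j
        have hdu : crossProduct ((Ω q)ᵀ 0) ((Ω q)ᵀ 1) ⬝ᵥ (Ω q)ᵀ 0 = 0 := by
          rw [dotProduct_comm]; exact dot_self_cross _ _
        have hdv : crossProduct ((Ω q)ᵀ 0) ((Ω q)ᵀ 1) ⬝ᵥ (Ω q)ᵀ 1 = 0 := by
          rw [dotProduct_comm]; exact dot_cross_self _ _
        have hcol : (Jac x q)ᵀ j = Λ q j 0 • (Ω q)ᵀ 0 + Λ q j 1 • (Ω q)ᵀ 1 := by
          funext a
          rw [heq q hq]
          simp only [Matrix.transpose_apply, Matrix.mul_apply, Fin.sum_univ_two, Pi.add_apply,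
            Pi.smul_apply, smul_eq_mul]
          ring
        rw [hcol]
        rw [smul_dotProduct, dotProduct_add, dotProduct_smul, dotProduct_smul, hdu, hdv]
        simp
end
end
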